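/- Let G be a finite simple bipartite graph with parts A and B such that every vertex of A has degree 3 and every vertex of B has degree 2, and let n = |A|. Let μ(G) denote the maximum size of a subset of B whose vertices have pairwise disjoint neighborhoods in G. Then the maximum of |N(S)| over all S ⊆ B with |S| ≤ |B| − n such that the bipartite subgraph induced on A ∪ (B \ S) contains a matching saturating A, equals n/2 + μ(G). -/

import Mathlib

open Finset

/-- The vertices of `B'` have pairwise disjoint neighborhoods in `G`. -/
def PDisjNbrs {V : Type*} (G : SimpleGraph V) (B' : Finset V) : Prop :=
  ∀ b₁ ∈ B', ∀ b₂ ∈ B', b₁ ≠ b₂ → ∀ a, ¬(G.Adj a b₁ ∧ G.Adj a b₂)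

/-- `N(S)`: the vertices of `A` adjacent to at least one vertex of `S`. -/
def nbhd {V : Type*} [DecidableEq V] (G : SimpleGraph V) [DecidableRel G.Adj]
    (A S : Finset V) : Finset V :=
  A.filter fun a => ∃ b ∈ S, G.Adj a b

/-- The bipartite subgraph of `G` induced on `A ∪ C` contains a matching saturating
every vertex of `A`, encoded by an injective choice of partners. -/
def SatMatch {V : Type*} (G : SimpleGraph V) (A C : Finset V) : Prop :=
  ∃ f : V → V, Set.InjOn f ↑A ∧ ∀ a ∈ A, f a ∈ C ∧ G.Adj a (f a)

/-! Think of `B` as the edge set of a cubic multigraph on `A`; then `PDisjNbrs` sets are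
matchings, and `|A| = 2m`, `|B| = 3m` with `m = |B| - |A|` by double counting.

Upper bound: growing `S` one vertex at a time, either the new vertex shares a neighbour with
what is already covered (it adds at most one vertex to `N(S)`) or it can be added to a
`PDisjNbrs` subset of `S`; hence `|N(S)| ≤ |S| + μ ≤ m + μ`.

Lower bound: take a maximum `PDisjNbrs` set `M` and let `U = A \ N(M)`, so `|U| = 2(m - μ)`.
Every vertex of `A` has at least two neighbours in `B \ M`, three if it lies in `U`. Hall's
theorem, applied to `A` together with a second copy of `U` that may also use `m - μ` spare
tokens, gives a matching of `A` into `B \ M` and `m - μ` further vertices `T ⊆ B \ M` with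
distinct private neighbours in `U`. Then `S = M ∪ T` covers `2μ + (m - μ)` vertices. -/

lemma satMatch_of_injective {V : Type*} (G : SimpleGraph V) {A C : Finset V} (g : A → V)
    (hg : Function.Injective g) (h : ∀ a, g a ∈ C ∧ G.Adj a (g a)) : SatMatch G A C := by
  classical
  refine ⟨fun v => if hv : v ∈ A then g ⟨v, hv⟩ else v, fun a ha b hb hab => ?_,
    fun a ha => by simpa [ha] using h ⟨a, ha⟩⟩
  simp only [mem_coe] at ha hb
  simp only [dif_pos ha, dif_pos hb] at hab
  exact congrArg Subtype.val (hg hab)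

lemma card_le_card_filter_isLeft_add {ι α : Type*} [Fintype ι] {k : ℕ} {f : ι → α ⊕ Fin k}
    (hf : Function.Injective f) : Fintype.card ι ≤ #(univ.filter fun i => (f i).isLeft) + k := by
  have hright : #(univ.filter fun i => ¬(f i).isLeft) ≤ k := by
    refine le_of_le_of_eq (card_le_card_of_injOn f (t := univ.map .inr) (fun i hi => ?_)
      hf.injOn) (by simp)
    obtain ⟨j, hj⟩ := Sum.isRight_iff.1 (Sum.not_isLeft.1 (mem_filter.1 hi).2)
    exact mem_map.2 ⟨j, mem_univ j, hj.symm⟩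
  have := card_filter_add_card_filter_not (s := univ) fun i => (f i).isLeft
  rw [card_univ] at this
  omega

lemma PDisjNbrs.insert {V : Type*} [DecidableEq V] {G : SimpleGraph V} {M : Finset V} {b : V}
    (hM : PDisjNbrs G M) (hb : ∀ c ∈ M, ∀ a, G.Adj a b → ¬G.Adj a c) : PDisjNbrs G (insert b M) := by
  intro b₁ h₁ b₂ h₂ hne a ⟨ha₁, ha₂⟩
  rcases mem_insert.1 h₁ with rfl | h₁M <;> rcases mem_insert.1 h₂ with rfl | h₂M
  · exact hne rfl
  · exact hb b₂ h₂M a ha₁ ha₂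
  · exact hb b₁ h₁M a ha₂ ha₁
  · exact hM b₁ h₁M b₂ h₂M hne a ⟨ha₁, ha₂⟩

section

variable {V : Type*} [DecidableEq V] (G : SimpleGraph V) [DecidableRel G.Adj]

lemma nbhd_subset (A S : Finset V) : nbhd G A S ⊆ A := filter_subset _ _

lemma nbhd_subset_nbhd {A A' S S' : Finset V} (hA : A ⊆ A') (hS : S ⊆ S') :
    nbhd G A S ⊆ nbhd G A' S' := by
  intro a ha
  obtain ⟨haA, b, hb, hab⟩ := mem_filter.1 ha
  exact mem_filter.2 ⟨hA haA, b, hS hb, hab⟩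

lemma nbhd_insert (A S : Finset V) (b : V) :
    nbhd G A (insert b S) = A.filter (G.Adj b) ∪ nbhd G A S := by
  ext a
  simp [nbhd, G.adj_comm b, ← filter_or]

lemma card_filter_adj_le_one_of_pdisjNbrs {M : Finset V} (hM : PDisjNbrs G M) (a : V) :
    #(M.filter (G.Adj a)) ≤ 1 :=
  card_le_one.2 fun b₁ h₁ b₂ h₂ => by
    by_contra hne
    exact hM b₁ (mem_filter.1 h₁).1 b₂ (mem_filter.1 h₂).1 hne a
      ⟨(mem_filter.1 h₁).2, (mem_filter.1 h₂).2⟩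

/-- Each `a ∈ A` is to be matched to a neighbour in `D`; each `u ∈ U` has a second copy, which
may be matched to a neighbour in `D` or to one of `k` spare tokens. -/
def matchingSlots (D A U : Finset V) (k : ℕ) : A ⊕ U → Finset (V ⊕ Fin k) :=
  Sum.elim (fun a => (D.filter (G.Adj a)).disjSum ∅) (fun u => (D.filter (G.Adj u)).disjSum univ)

variable {A D U : Finset V} {k : ℕ}

lemma card_le_card_biUnion_matchingSlots (hUA : U ⊆ A) (hU : #U ≤ 2 * k)
    (hall : ∀ Y ⊆ A, 2 * #Y + #(Y ∩ U) ≤ 2 * #(nbhd G D Y)) (s : Finset (A ⊕ U)) :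
    #s ≤ #(s.biUnion (matchingSlots G D A U k)) := by
  set Y := s.toLeft.map (Function.Embedding.subtype _) ∪
    s.toRight.map (Function.Embedding.subtype _)
  have hYA : Y ⊆ A := by
    refine union_subset (fun a ha => ?_) (fun a ha => ?_) <;>
      obtain ⟨x, -, rfl⟩ := mem_map.1 ha
    exacts [x.2, hUA x.2]
  have hleft : #s.toLeft ≤ #Y := (card_map _).ge.trans (card_le_card subset_union_left)
  have hright : #s.toRight ≤ #(Y ∩ U) := by
    refine (card_map (Function.Embedding.subtype (· ∈ U))).ge.trans (card_le_card fun u hu => ?_)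
    obtain ⟨x, -, rfl⟩ := mem_map.1 hu
    exact mem_inter.2 ⟨subset_union_right hu, x.2⟩
  have hnbhd : nbhd G D Y ⊆ (s.biUnion (matchingSlots G D A U k)).toLeft := by
    intro b hb
    obtain ⟨hbD, a, ha, hba⟩ := mem_filter.1 hb
    simp only [Y, mem_union, mem_map, Function.Embedding.coe_subtype] at ha
    simp only [mem_toLeft, mem_biUnion]
    rcases ha with ⟨x, hx, rfl⟩ | ⟨x, hx, rfl⟩
    · exact ⟨.inl x, mem_toLeft.1 hx, by simp [matchingSlots, hbD, hba.symm]⟩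
    · exact ⟨.inr x, mem_toRight.1 hx, by simp [matchingSlots, hbD, hba.symm]⟩
  have hspare : s.toRight.Nonempty → k ≤ #(s.biUnion (matchingSlots G D A U k)).toRight := by
    rintro ⟨u, hu⟩
    refine le_of_eq_of_le (card_fin k).symm (card_le_card fun j _ => ?_)
    simp only [mem_toRight, mem_biUnion]
    exact ⟨.inr u, mem_toRight.1 hu, by simp [matchingSlots]⟩
  rw [← card_toLeft_add_card_toRight (u := s),
    ← card_toLeft_add_card_toRight (u := s.biUnion _)]
  have := hall Y hYA
  have := card_le_card (inter_subset_right : Y ∩ U ⊆ U)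
  have := card_le_card hnbhd
  rcases s.toRight.eq_empty_or_nonempty with hs | hs
  · rw [hs, card_empty]
    omega
  · have := hspare hs
    omega

/-- The spare tokens absorb at most `k` copies of `U`, so at least `k` of them are matched
into `D`; `k` of their partners form `T`. -/
lemma exists_satMatch_sdiff_le_card_nbhd (hUA : U ⊆ A) (hU : #U = 2 * k)
    (hall : ∀ Y ⊆ A, 2 * #Y + #(Y ∩ U) ≤ 2 * #(nbhd G D Y)) :
    ∃ T ⊆ D, #T = k ∧ SatMatch G A (D \ T) ∧ k ≤ #(nbhd G U T) := by
  obtain ⟨φ, hφ, hφt⟩ := (all_card_le_biUnion_card_iff_exists_injective _).1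
    (card_le_card_biUnion_matchingSlots G hUA hU.le hall)
  have hφA : ∀ a : A, ∃ b, φ (.inl a) = .inl b ∧ b ∈ D ∧ G.Adj a b := by
    intro a
    have := hφt (.inl a)
    simp only [matchingSlots, Sum.elim_inl, disjSum_empty, mem_map, mem_filter] at this
    obtain ⟨b, ⟨hbD, hab⟩, hb⟩ := this
    exact ⟨b, hb.symm, hbD, hab⟩
  choose g hgφ hgD hgadj using hφA
  have hleft : #U ≤ #(univ.filter fun u : U => (φ (.inr u)).isLeft) + k := by
    simpa using card_le_card_filter_isLeft_add (hφ.comp Sum.inr_injective)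
  obtain ⟨X, hX, hXk⟩ :=
    exists_subset_card_eq (show k ≤ #(univ.filter fun u : U => (φ (.inr u)).isLeft) by omega)
  set p : U → V := fun u => (φ (.inr u)).elim id fun _ => u
  have hφX : ∀ u ∈ X, φ (.inr u) = .inl (p u) ∧ p u ∈ D ∧ G.Adj u (p u) := by
    intro u hu
    obtain ⟨b, hb⟩ := Sum.isLeft_iff.1 (mem_filter.1 (hX hu)).2
    have hpu : p u = b := by simp [p, hb]
    rw [hpu, hb]
    simpa [matchingSlots, hb] using hφt (.inr u)
  have hpφ u hu := (hφX u hu).1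
  have hpinj : Set.InjOn p X := fun u hu v hv h => Sum.inr_injective <| hφ <| by
    rw [hpφ u hu, hpφ v hv, h]
  refine ⟨X.image p, fun b hb => ?_, by rw [card_image_of_injOn hpinj, hXk], ?_, ?_⟩
  · obtain ⟨u, hu, rfl⟩ := mem_image.1 hb
    exact (hφX u hu).2.1
  · refine satMatch_of_injective G g (fun a a' h => Sum.inl_injective <| hφ <| by
      rw [hgφ, hgφ, h]) fun a => ⟨mem_sdiff.2 ⟨hgD a, fun hT => ?_⟩, hgadj a⟩
    obtain ⟨u, hu, hpu⟩ := mem_image.1 hT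
    have : φ (.inr u) = φ (.inl a) := by rw [hpφ u hu, hpu, hgφ]
    exact Sum.inr_ne_inl (hφ this)
  · refine hXk.symm.le.trans <| le_of_eq_of_le (card_map (Function.Embedding.subtype _)).symm
      (card_le_card fun v hv => ?_)
    obtain ⟨u, hu, rfl⟩ := mem_map.1 hv
    exact mem_filter.2 ⟨u.2, p u, mem_image_of_mem p hu, (hφX u hu).2.2⟩

end

section

variable {V : Type*} [Fintype V] (G : SimpleGraph V) [DecidableRel G.Adj]

lemma neighborFinset_subset_of_bipartite {A B : Finset V} (hdisj : Disjoint A B)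
    (hbip : ∀ v w, G.Adj v w → (v ∈ A ∧ w ∈ B) ∨ (v ∈ B ∧ w ∈ A)) {a : V} (ha : a ∈ A) :
    G.neighborFinset a ⊆ B := by
  intro b hb
  rcases hbip a b ((G.mem_neighborFinset a b).1 hb) with ⟨-, hb⟩ | ⟨haB, -⟩
  · exact hb
  · exact absurd haB (disjoint_left.1 hdisj ha)

lemma filter_adj_eq_neighborFinset {X : Finset V} {v : V} (h : G.neighborFinset v ⊆ X) :
    X.filter (G.Adj v) = G.neighborFinset v := by
  ext w
  simpa using fun hw => h ((G.mem_neighborFinset v w).2 hw)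

lemma card_mul_eq_card_mul_of_biregular {A B : Finset V}
    (hA : ∀ a ∈ A, G.neighborFinset a ⊆ B) (hB : ∀ b ∈ B, G.neighborFinset b ⊆ A)
    {p q : ℕ} (hp : ∀ a ∈ A, G.degree a = p) (hq : ∀ b ∈ B, G.degree b = q) :
    #A * p = #B * q := by
  refine card_mul_eq_card_mul G.Adj (fun a ha => ?_) (fun b hb => ?_)
  · rw [bipartiteAbove, filter_adj_eq_neighborFinset G (hA a ha),
      G.card_neighborFinset_eq_degree, hp a ha]
  · simp_rw [bipartiteBelow, G.adj_comm _ b]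
    rw [filter_adj_eq_neighborFinset G (hB b hb), G.card_neighborFinset_eq_degree, hq b hb]

variable [DecidableEq V]

lemma exists_pdisjNbrs_subset_card_nbhd_le {A S : Finset V}
    (hSA : ∀ b ∈ S, G.neighborFinset b ⊆ A) (hdeg : ∀ b ∈ S, G.degree b ≤ 2) :
    ∃ M ⊆ S, PDisjNbrs G M ∧ #(nbhd G A S) ≤ #S + #M := by
  induction S using Finset.induction_on with
  | empty => exact ⟨∅, subset_rfl, by simp [PDisjNbrs], by simp [nbhd]⟩
  | insert b S hbS ih =>
    obtain ⟨M, hMS, hM, hcard⟩ := ih (fun c hc => hSA c (mem_insert_of_mem hc))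
      (fun c hc => hdeg c (mem_insert_of_mem hc))
    have hbA := hSA b (mem_insert_self b S)
    have hNb : #(A.filter (G.Adj b)) ≤ 2 := by
      rw [filter_adj_eq_neighborFinset G hbA]
      exact hdeg b (mem_insert_self b S)
    have hunion := card_union_add_card_inter (A.filter (G.Adj b)) (nbhd G A S)
    rw [nbhd_insert, card_insert_of_notMem hbS]
    by_cases hshare : (A.filter (G.Adj b) ∩ nbhd G A S).Nonempty
    · have := hshare.card_pos
      exact ⟨M, hMS.trans (subset_insert b S), hM, by omega⟩
    · refine ⟨insert b M, insert_subset_insert b hMS, ?_, ?_⟩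
      · refine hM.insert fun c hc a hab hac => hshare ⟨a, ?_⟩
        have haA : a ∈ A := hbA ((G.mem_neighborFinset b a).2 hab.symm)
        exact mem_inter.2 ⟨mem_filter.2 ⟨haA, hab.symm⟩, mem_filter.2 ⟨haA, c, hMS hc, hac⟩⟩
      · rw [card_insert_of_notMem (fun h => hbS (hMS h))]
        rw [not_nonempty_iff_eq_empty.1 hshare] at hunion
        omega

lemma card_nbhd_eq_sum_degree_of_pdisjNbrs {A M : Finset V}
    (hMA : ∀ b ∈ M, G.neighborFinset b ⊆ A) (hM : PDisjNbrs G M) :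
    #(nbhd G A M) = ∑ b ∈ M, G.degree b := by
  have hN : nbhd G A M = M.biUnion fun b => G.neighborFinset b := by
    ext a
    simp only [nbhd, mem_filter, mem_biUnion, SimpleGraph.mem_neighborFinset]
    exact ⟨fun ⟨_, b, hb, hab⟩ => ⟨b, hb, hab.symm⟩,
      fun ⟨b, hb, hba⟩ => ⟨hMA b hb ((G.mem_neighborFinset b a).2 hba), b, hb, hba.symm⟩⟩
  rw [hN, card_biUnion]
  · rfl
  · intro b₁ h₁ b₂ h₂ hne
    refine disjoint_left.2 fun a ha₁ ha₂ => hM b₁ h₁ b₂ h₂ hne a ⟨?_, ?_⟩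
    · exact ((G.mem_neighborFinset b₁ a).1 ha₁).symm
    · exact ((G.mem_neighborFinset b₂ a).1 ha₂).symm

lemma card_filter_adj_sdiff_add_card_filter_adj {B M : Finset V} (hMB : M ⊆ B) {a : V}
    (ha : G.neighborFinset a ⊆ B) :
    #((B \ M).filter (G.Adj a)) + #(M.filter (G.Adj a)) = G.degree a := by
  have hsplit : (B \ M).filter (G.Adj a) = B.filter (G.Adj a) \ M.filter (G.Adj a) := by
    ext; simp only [mem_filter, mem_sdiff]; tauto
  rw [hsplit, card_sdiff_add_card_eq_card (filter_subset_filter _ hMB),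
    filter_adj_eq_neighborFinset G ha, G.card_neighborFinset_eq_degree]

lemma sum_card_filter_adj_le_mul_card_nbhd {D Y : Finset V} {q : ℕ}
    (hD : ∀ b ∈ D, G.degree b ≤ q) :
    ∑ a ∈ Y, #(D.filter (G.Adj a)) ≤ q * #(nbhd G D Y) := by
  have habove : ∀ a ∈ Y, (nbhd G D Y).bipartiteAbove G.Adj a = D.filter (G.Adj a) := by
    intro a ha
    ext b
    simp only [bipartiteAbove, nbhd, mem_filter]
    exact ⟨fun ⟨⟨hb, _⟩, hab⟩ => ⟨hb, hab⟩, fun ⟨hb, hab⟩ => ⟨⟨hb, a, ha, hab.symm⟩, hab⟩⟩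
  have hbelow : ∀ b ∈ nbhd G D Y, #(Y.bipartiteBelow G.Adj b) ≤ q := by
    intro b hb
    refine (card_le_card fun a ha => ?_).trans (hD b (mem_filter.1 hb).1)
    exact (G.mem_neighborFinset b a).2 (mem_bipartiteBelow G.Adj |>.1 ha).2.symm
  calc ∑ a ∈ Y, #(D.filter (G.Adj a))
      = ∑ a ∈ Y, #((nbhd G D Y).bipartiteAbove G.Adj a) := sum_congr rfl fun a ha => by
        rw [habove a ha]
    _ = ∑ b ∈ nbhd G D Y, #(Y.bipartiteBelow G.Adj b) :=
        sum_card_bipartiteAbove_eq_sum_card_bipartiteBelow G.Adj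
    _ ≤ ∑ _b ∈ nbhd G D Y, q := sum_le_sum hbelow
    _ = q * #(nbhd G D Y) := by rw [sum_const, smul_eq_mul, mul_comm]

end


section

variable {V : Type*} [Fintype V] [DecidableEq V] (G : SimpleGraph V) [DecidableRel G.Adj]
variable {A B M : Finset V} (hA : ∀ a ∈ A, G.neighborFinset a ⊆ B)
  (hB : ∀ b ∈ B, G.neighborFinset b ⊆ A) (hdegA : ∀ a ∈ A, G.degree a = 3)
  (hdegB : ∀ b ∈ B, G.degree b = 2) (hMB : M ⊆ B) (hM : PDisjNbrs G M)
include hA hdegA hdegB hMB hM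

/-- A vertex of `A` loses at most one neighbour to `M`, and none if it is not covered by `M`. -/
lemma two_mul_card_add_card_inter_le {Y : Finset V} (hYA : Y ⊆ A) :
    2 * #Y + #(Y ∩ (A \ nbhd G A M)) ≤ 2 * #(nbhd G (B \ M) Y) := by
  calc 2 * #Y + #(Y ∩ (A \ nbhd G A M))
      = ∑ a ∈ Y, (2 + if a ∈ A \ nbhd G A M then 1 else 0) := by
        rw [sum_add_distrib, sum_const, smul_eq_mul, mul_comm, sum_boole, Nat.cast_id,
          filter_mem_eq_inter]
    _ ≤ ∑ a ∈ Y, #((B \ M).filter (G.Adj a)) := sum_le_sum fun a ha => by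
        have hsplit := card_filter_adj_sdiff_add_card_filter_adj G hMB (hA a (hYA ha))
        have hle := card_filter_adj_le_one_of_pdisjNbrs G hM a
        rw [hdegA a (hYA ha)] at hsplit
        split_ifs with haN
        · have hempty : M.filter (G.Adj a) = ∅ := filter_eq_empty_iff.2 fun b hb hab =>
            (mem_sdiff.1 haN).2 (mem_filter.2 ⟨hYA ha, b, hb, hab⟩)
          rw [hempty, card_empty] at hsplit
          omega
        · omega
    _ ≤ 2 * #(nbhd G (B \ M) Y) :=
        sum_card_filter_adj_le_mul_card_nbhd G fun b hb => (hdegB b (mem_sdiff.1 hb).1).le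

include hB

lemma exists_satMatch_le_card_nbhd :
    ∃ S ⊆ B, #S ≤ #B - #A ∧ SatMatch G A (B \ S) ∧ #A / 2 + #M ≤ #(nbhd G A S) := by
  have hcount := card_mul_eq_card_mul_of_biregular G hA hB hdegA hdegB
  have hNM : #(nbhd G A M) = 2 * #M := by
    rw [card_nbhd_eq_sum_degree_of_pdisjNbrs G (fun b hb => hB b (hMB hb)) hM,
      sum_congr rfl fun b hb => hdegB b (hMB hb), sum_const, smul_eq_mul, mul_comm]
  have hNA : #(nbhd G A M) ≤ #A := card_le_card (nbhd_subset G A M)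
  have hU : #(A \ nbhd G A M) = 2 * (#B - #A - #M) := by
    rw [card_sdiff_of_subset (nbhd_subset G A M)]
    omega
  obtain ⟨T, hTD, hT, hmatch, hcover⟩ := exists_satMatch_sdiff_le_card_nbhd G sdiff_subset hU
    fun Y hYA => two_mul_card_add_card_inter_le G hA hdegA hdegB hMB hM hYA
  have hdisj : Disjoint (nbhd G A M) (nbhd G (A \ nbhd G A M) T) :=
    disjoint_of_subset_right (nbhd_subset G _ T) disjoint_sdiff
  refine ⟨M ∪ T, union_subset hMB (hTD.trans sdiff_subset),
    (card_union_le _ _).trans (by omega), by rwa [sdiff_sdiff_left] at hmatch, ?_⟩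
  calc #A / 2 + #M = #(nbhd G A M) + (#B - #A - #M) := by omega
    _ ≤ #(nbhd G A M ∪ nbhd G (A \ nbhd G A M) T) := by
        rw [card_union_of_disjoint hdisj]
        omega
    _ ≤ #(nbhd G A (M ∪ T)) := card_le_card <| union_subset
        (nbhd_subset_nbhd G subset_rfl subset_union_left)
        (nbhd_subset_nbhd G sdiff_subset subset_union_right)

end

theorem stmt_2 {V : Type*} [Fintype V] [DecidableEq V] (G : SimpleGraph V)
    [DecidableRel G.Adj] (A B : Finset V) (hdisj : Disjoint A B)
    (hbip : ∀ v w, G.Adj v w → (v ∈ A ∧ w ∈ B) ∨ (v ∈ B ∧ w ∈ A))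
    (hdegA : ∀ a ∈ A, G.degree a = 3) (hdegB : ∀ b ∈ B, G.degree b = 2)
    (mu : ℕ) (hmu₁ : ∃ B' ⊆ B, PDisjNbrs G B' ∧ B'.card = mu)
    (hmu₂ : ∀ B' ⊆ B, PDisjNbrs G B' → B'.card ≤ mu) :
    (∃ S ⊆ B, S.card ≤ B.card - A.card ∧ SatMatch G A (B \ S) ∧
      (nbhd G A S).card = A.card / 2 + mu) ∧
    (∀ S ⊆ B, S.card ≤ B.card - A.card → SatMatch G A (B \ S) →
      (nbhd G A S).card ≤ A.card / 2 + mu) := by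
  have hA : ∀ a ∈ A, G.neighborFinset a ⊆ B := fun a =>
    neighborFinset_subset_of_bipartite G hdisj hbip
  have hB : ∀ b ∈ B, G.neighborFinset b ⊆ A := fun b =>
    neighborFinset_subset_of_bipartite G hdisj.symm fun v w h => (hbip v w h).symm
  have hcount := card_mul_eq_card_mul_of_biregular G hA hB hdegA hdegB
  have hupper : ∀ S ⊆ B, #S ≤ #B - #A → #(nbhd G A S) ≤ #A / 2 + mu := by
    intro S hSB hS
    obtain ⟨M, hMS, hM, hcard⟩ := exists_pdisjNbrs_subset_card_nbhd_le G
      (fun b hb => hB b (hSB hb)) (fun b hb => (hdegB b (hSB hb)).le)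
    have := hmu₂ M (hMS.trans hSB) hM
    omega
  obtain ⟨M, hMB, hM, rfl⟩ := hmu₁
  obtain ⟨S, hSB, hS, hmatch, hcover⟩ := exists_satMatch_le_card_nbhd G hA hB hdegA hdegB hMB hM
  exact ⟨⟨S, hSB, hS, hmatch, le_antisymm (hupper S hSB hS) hcover⟩,
    fun S hSB hS _ => hupper S hSB hS⟩
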